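/- arXiv:2006.03180 — 13 statements merged into one kernel-verified Lean document; each statement's English description precedes it below -/
import Mathlib

section
/- Let S be a semigroup satisfying the identity x·y·z·x·y = x·y for all x, y, z ∈ S (i.e., S is in GRB). Then the following are equivalent: (1) for all x, y, z, u, w ∈ S, x·y·z = x·y·w·z or x·y·z = x·u·y·z; (2) for all x, y, z ∈ S, x·y·y = x·y or z·z·x = z·x. -/
/-!
The identity `x y z x y = x y` lets one delete any factor standing between two products of
length two, and it makes each of `x y y = x y`, `z z x = z x` follow from its "multiplied"
form `z x y y = z x y`, resp. `z z x y = z x y`. Hence condition (2) is equivalent to one of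
the two laws `x y y = x y`, `x x y = x y` holding globally: a single failure of the first
forces the second everywhere. Under the first law `x y w z = x y z`, under the second
`x u y z = x y z`, which gives (1); conversely (1) instantiated at `(z, x, y, z, y)` gives (2).
-/

def IsGRB (S : Type*) [Semigroup S] : Prop :=
  ∀ x y z : S, x * y * z * x * y = x * y

namespace IsGRB

variable {S : Type*} [Semigroup S]

theorem erase_middle (h : IsGRB S) (a b m c d : S) :
    a * b * m * c * d = a * b * c * d := by
  symm
  calc a * b * c * d
      = (a * b * (m * (c * d)) * a * b) * (c * d) := by rw [h]; simp only [mul_assoc]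
    _ = a * b * m * (c * d * (a * b) * c * d) := by simp only [mul_assoc]
    _ = a * b * m * c * d := by rw [h]; simp only [mul_assoc]

theorem mul_mul_self_of_left_mul (h : IsGRB S) {x y z : S} (hz : z * x * y * y = z * x * y) :
    x * y * y = x * y :=
  calc x * y * y
      = (x * y * z * x * y) * y := by rw [h]
    _ = x * y * (z * x * y * y) := by simp only [mul_assoc]
    _ = x * y * z * x * y := by rw [hz]; simp only [mul_assoc]
    _ = x * y := h x y z

theorem mul_self_mul_of_mul_right (h : IsGRB S) {x y z : S} (hy : z * z * x * y = z * x * y) :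
    z * z * x = z * x :=
  calc z * z * x
      = z * (z * x * y * z * x) := by rw [h]; simp only [mul_assoc]
    _ = (z * z * x * y) * (z * x) := by simp only [mul_assoc]
    _ = z * x * y * z * x := by rw [hy]; simp only [mul_assoc]
    _ = z * x := h z x y

theorem right_or_left_idempotent_law (h : IsGRB S)
    (h2 : ∀ x y z : S, x * y * y = x * y ∨ z * z * x = z * x) :
    (∀ x y : S, x * y * y = x * y) ∨ ∀ x y : S, x * x * y = x * y := by
  refine or_iff_not_imp_left.2 fun hne c v => ?_
  push Not at hne
  obtain ⟨a, b, hab⟩ := hne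
  rcases h2 (v * a) b c with hva | hc
  · exact absurd (h.mul_mul_self_of_left_mul hva) hab
  · exact h.mul_self_mul_of_mul_right (y := a) (by simpa only [mul_assoc] using hc)

theorem mul_mul_mul_eq_of_right (h : IsGRB S) (hr : ∀ x y : S, x * y * y = x * y)
    (x y w z : S) : x * y * z = x * y * w * z := by
  rw [← hr (x * y * w) z, h.erase_middle, hr]

theorem mul_mul_mul_eq_of_left (h : IsGRB S) (hl : ∀ x y : S, x * x * y = x * y)
    (x u y z : S) : x * y * z = x * u * y * z := by
  rw [← hl x u, h.erase_middle, hl]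

end IsGRB

theorem stmt_0 {S : Type*} [Semigroup S]
    (hGRB : ∀ x y z : S, x * y * z * x * y = x * y) :
    (∀ x y z u w : S, x * y * z = x * y * w * z ∨ x * y * z = x * u * y * z) ↔
    (∀ x y z : S, x * y * y = x * y ∨ z * z * x = z * x) := by
  have hS : IsGRB S := hGRB
  constructor
  · intro h1 x y z
    rcases h1 z x y z y with h | h
    · exact Or.inl (hS.mul_mul_self_of_left_mul h.symm)
    · exact Or.inr (hS.mul_self_mul_of_mul_right h.symm)
  · intro h2 x y z u w
    rcases hS.right_or_left_idempotent_law h2 with hr | hl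
    · exact Or.inl (hS.mul_mul_mul_eq_of_right hr x y w z)
    · exact Or.inr (hS.mul_mul_mul_eq_of_left hl x u y z)
end

section
/- Let S be a semigroup satisfying the identity x·y·z·x·y = x·y for all x, y, z ∈ S, and suppose that for all x, y, z, u, w ∈ S, x·y·z = x·y·w·z or x·y·z = x·u·y·z. Then for all x, y, z ∈ S, x·y·y = x·y or z·z·x = z·x. -/
/-!
Instantiating the disjunction of `I` at `(z, x, y, z, y)` gives `z x y = z x y y` or
`z x y = z z x y`. In a `GRB` semigroup either equation can be inserted into a product of the
form `a b c a b = a b`: the first yields `x y y = x y`, the second `z z x = z x`.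
-/

section GRB

variable {S : Type*} [Semigroup S]

theorem mul_mul_self_eq_of_mul_mul_mul_self_eq
    (hGRB : ∀ x y z : S, x * y * z * x * y = x * y) {x y z : S}
    (h : z * x * y * y = z * x * y) : x * y * y = x * y :=
  calc x * y * y = x * (y * y) * (z * z) * x * (y * y) := by
        rw [hGRB x (y * y) (z * z), ← mul_assoc]
    _ = x * y * y * z * (z * x * y * y) := by simp only [mul_assoc]
    _ = x * y * y * z * (z * x * y) := by rw [h]
    _ = x * y * (y * (z * z)) * x * y := by simp only [mul_assoc]
    _ = x * y := hGRB x y (y * (z * z))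

theorem mul_self_mul_eq_of_mul_self_mul_mul_eq
    (hGRB : ∀ x y z : S, x * y * z * x * y = x * y) {x y z : S}
    (h : z * z * x * y = z * x * y) : z * z * x = z * x :=
  calc z * z * x = z * (z * x * (y * (z * y)) * z * x) := by
        rw [hGRB z x (y * (z * y)), ← mul_assoc]
    _ = z * z * x * y * (z * y * (z * x)) := by simp only [mul_assoc]
    _ = z * x * y * (z * y * (z * x)) := by rw [h]
    _ = z * x * (y * (z * y)) * z * x := by simp only [mul_assoc]
    _ = z * x := hGRB z x (y * (z * y))

end GRB

theorem stmt_1 {S : Type*} [Semigroup S]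
    (hGRB : ∀ x y z : S, x * y * z * x * y = x * y)
    (hI : ∀ x y z u w : S, x * y * z = x * y * w * z ∨ x * y * z = x * u * y * z) :
    ∀ x y z : S, x * y * y = x * y ∨ z * z * x = z * x := by
  intro x y z
  rcases hI z x y z y with h | h
  · exact .inl (mul_mul_self_eq_of_mul_mul_mul_self_eq hGRB h.symm)
  · exact .inr (mul_self_mul_eq_of_mul_self_mul_mul_eq hGRB h.symm)
end

section
/- Let S be a semigroup satisfying the identity x·y·z·x·y = x·y for all x, y, z ∈ S, and suppose that for all x, y, z ∈ S, x·y·y = x·y or z·z·x = z·x. Then for all x, y, z, u, w ∈ S, x·y·z = x·y·w·z or x·y·z = x·u·y·z. -/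
/-!
In a GRB semigroup both squares can be cancelled from a longer product: left-multiplying
`s·w·z·z = s·w·z` by `w·z` and using `w·z·s·w·z = w·z` gives `w·z·z = w·z`, and dually
`x·x·s·t = x·s·t` gives `x·x·s = x·s`. So every instance of the hypothesis at `(s·t, z, x)`
yields `t·z·z = t·z` or `x·x·s = x·s`. The pair `y·z·z = y·z`, `w·z·z = w·z` forces
`x·y·z = x·y·w·z`, the pair `x·x·y = x·y`, `x·x·u = x·u` forces `x·y·z = x·u·y·z`, and the
instances at `(y, w)`, `(y, y)`, `(u, y)`, `(u, w)` always supply one of the two pairs.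
-/

namespace GRB

variable {S : Type*} [Semigroup S]

theorem mul_self_right_of_mul_left (hGRB : ∀ x y z : S, x * y * z * x * y = x * y)
    {s w z : S} (h : s * w * z * z = s * w * z) : w * z * z = w * z :=
  calc w * z * z = w * z * s * w * z * z := by rw [hGRB w z s]
    _ = w * z * (s * w * z * z) := by simp only [mul_assoc]
    _ = w * z * (s * w * z) := by rw [h]
    _ = w * z := by simp only [← mul_assoc, hGRB]

theorem mul_self_left_of_mul_right (hGRB : ∀ x y z : S, x * y * z * x * y = x * y)
    {x s t : S} (h : x * x * (s * t) = x * (s * t)) : x * x * s = x * s :=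
  calc x * x * s = x * (x * s * t * x * s) := by rw [hGRB, mul_assoc]
    _ = x * x * (s * t) * (x * s) := by simp only [mul_assoc]
    _ = x * (s * t) * (x * s) := by rw [h]
    _ = x * s := by simp only [← mul_assoc, hGRB]

theorem mul_self_right_or_mul_self_left (hGRB : ∀ x y z : S, x * y * z * x * y = x * y)
    (h2 : ∀ x y z : S, x * y * y = x * y ∨ z * z * x = z * x) (x z s t : S) :
    t * z * z = t * z ∨ x * x * s = x * s :=
  (h2 (s * t) z x).imp (mul_self_right_of_mul_left hGRB) (mul_self_left_of_mul_right hGRB)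

theorem mul_mul_eq_of_mul_self_right (hGRB : ∀ x y z : S, x * y * z * x * y = x * y)
    {x y z w : S} (hy : y * z * z = y * z) (hw : w * z * z = w * z) :
    x * y * z = x * y * w * z :=
  calc x * y * z = x * y * z * z := by rw [mul_assoc x y z, mul_assoc, hy]
    _ = x * y * (w * z * z) * x * y * z * z := by rw [hGRB x y]
    _ = x * y * w * (z * z * (x * y) * z * z) := by simp only [mul_assoc]
    _ = x * y * (w * z * z) := by rw [hGRB]; simp only [mul_assoc]
    _ = x * y * w * z := by rw [hw, ← mul_assoc]

theorem mul_mul_eq_of_mul_self_left (hGRB : ∀ x y z : S, x * y * z * x * y = x * y)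
    {x y z u : S} (hy : x * x * y = x * y) (hu : x * x * u = x * u) :
    x * y * z = x * u * y * z :=
  calc x * y * z = x * x * y * z := by rw [hy]
    _ = x * x * (x * u * y * z) * x * x * y * z := by rw [hGRB x x]
    _ = x * x * x * u * (y * z * (x * x) * y * z) := by simp only [mul_assoc]
    _ = x * (x * x * u) * (y * z) := by rw [hGRB]; simp only [mul_assoc]
    _ = x * u * y * z := by rw [hu, ← mul_assoc x x u, hu, ← mul_assoc]

end GRB

theorem stmt_2 {S : Type*} [Semigroup S]
    (hGRB : ∀ x y z : S, x * y * z * x * y = x * y)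
    (h2 : ∀ x y z : S, x * y * y = x * y ∨ z * z * x = z * x) :
    ∀ x y z u w : S, x * y * z = x * y * w * z ∨ x * y * z = x * u * y * z := by
  intro x y z u w
  have dichotomy := GRB.mul_self_right_or_mul_self_left hGRB h2 x z
  by_cases hw : w * z * z = w * z
  · by_cases hy : y * z * z = y * z
    · exact Or.inl (GRB.mul_mul_eq_of_mul_self_right hGRB hy hw)
    · exact Or.inr (GRB.mul_mul_eq_of_mul_self_left hGRB
        ((dichotomy y y).resolve_left hy) ((dichotomy u y).resolve_left hy))
  · exact Or.inr (GRB.mul_mul_eq_of_mul_self_left hGRB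
      ((dichotomy y w).resolve_left hw) ((dichotomy u w).resolve_left hw))
end

section
/- Let S be a semigroup such that S² = {x·y : x, y ∈ S} is a rectangular band, i.e., (a·b)·(c·d)·(a·b) = a·b for all a, b, c, d ∈ S. Then S satisfies all of the following identities: (i) x·y·x·y = x·y; (ii) x·y·z·u·v = x·y·u·v; (iii) x·y·z·x·y = x·y; (iv) x·y·y·z = x·y·z; (v) x·x·x = x·x, for all x, y, z, u, v ∈ S. -/
/-!
Write `p, q, r` for elements of `S²`. Since `p = p p p`, also `p p = (p p p) p = p (p p) p = p`, so
`S²` consists of idempotents. Hence `p q r = p (q (p r) q) r = (p q p) (r q r) = p r`, and for an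
arbitrary `s` also `p s r = p s (r r) = p (s r) r = p r`, because `s r ∈ S²`. Each of the five
identities is an instance of this cancellation or of idempotency after rebracketing.
-/

section SqRectangularBand

variable {S : Type*} [Semigroup S]

theorem isIdempotentElem_mul_of_sq_rectangularBand
    (hRB : ∀ a b c d : S, a * b * (c * d) * (a * b) = a * b) (a b : S) :
    IsIdempotentElem (a * b) := by
  have hcube : a * b * (a * b) * (a * b) = a * b := hRB a b a b
  calc a * b * (a * b)
      = a * b * (a * b) * (a * b) * (a * b) := by rw [hcube]
    _ = a * b * (a * b * (a * b)) * (a * b) := by rw [mul_assoc (a * b) (a * b) (a * b)]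
    _ = a * b := hRB a b (a * b) (a * b)

theorem mul_mul_mul_cancel_of_sq_rectangularBand
    (hRB : ∀ a b c d : S, a * b * (c * d) * (a * b) = a * b) (a b c d e f : S) :
    a * b * (c * d) * (e * f) = a * b * (e * f) := by
  have hmiddle : c * d * (a * b * (e * f)) * (c * d) = c * d := by
    rw [mul_assoc a b (e * f)]
    exact hRB c d a (b * (e * f))
  calc a * b * (c * d) * (e * f)
      = a * b * (c * d * (a * b * (e * f)) * (c * d)) * (e * f) := by rw [hmiddle]
    _ = a * b * (c * d) * (a * b) * (e * f * (c * d) * (e * f)) := by simp only [mul_assoc]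
    _ = a * b * (e * f) := by rw [hRB a b c d, hRB e f c d]

theorem mul_mul_cancel_of_sq_rectangularBand
    (hRB : ∀ a b c d : S, a * b * (c * d) * (a * b) = a * b) (a b s c d : S) :
    a * b * s * (c * d) = a * b * (c * d) := by
  calc a * b * s * (c * d)
      = a * b * s * (c * d * (c * d)) := by
        rw [(isIdempotentElem_mul_of_sq_rectangularBand hRB c d).eq]
    _ = a * b * (s * c * d) * (c * d) := by simp only [mul_assoc]
    _ = a * b * (c * d) := mul_mul_mul_cancel_of_sq_rectangularBand hRB a b (s * c) d c d

end SqRectangularBand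

theorem stmt_3 {S : Type*} [Semigroup S]
    (hRB : ∀ a b c d : S, (a * b) * (c * d) * (a * b) = a * b) :
    (∀ x y : S, x * y * x * y = x * y) ∧
    (∀ x y z u v : S, x * y * z * u * v = x * y * u * v) ∧
    (∀ x y z : S, x * y * z * x * y = x * y) ∧
    (∀ x y z : S, x * y * y * z = x * y * z) ∧
    (∀ x : S, x * x * x = x * x) := by
  have idem := isIdempotentElem_mul_of_sq_rectangularBand hRB
  have cancel := mul_mul_cancel_of_sq_rectangularBand hRB
  have h₂ : ∀ x y z u v : S, x * y * z * u * v = x * y * u * v := fun x y z u v => by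
    simpa only [← mul_assoc] using cancel x y z u v
  have h₄ : ∀ x y z : S, x * y * y * z = x * y * z := fun x y z =>
    calc x * y * y * z
        = x * (y * z * (y * z)) := by rw [← h₂ x y z y z]; simp only [mul_assoc]
      _ = x * y * z := by rw [(idem y z).eq, mul_assoc]
  refine ⟨fun x y => ?_, h₂, fun x y z => ?_, h₄, fun x => ?_⟩
  · rw [mul_assoc (x * y), (idem x y).eq]
  · rw [mul_assoc (x * y * z), cancel, (idem x y).eq]
  · rw [← h₄ x x x, mul_assoc (x * x), (idem x x).eq]
end

section
/- Let S be a semigroup satisfying the identity x·y·z·x·y = x·y for all x, y, z ∈ S, and suppose that for all x, y, z, u, w ∈ S, x·y·z = x·y·w·z or x·y·z = x·u·y·z. Then for all x, y, z, u, v, w ∈ S, x·y·z·u = x·z·u or v·z·w·u = v·z·u. -/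
/-!
By the defining dichotomy of the class, applied to `x · z · u`, either `y` can be inserted after `x`
or `w` can be inserted after `z`. In the second case the insertion of `w` transfers from the prefix
`x` to any prefix `v`: were it to fail for `v`, the dichotomy would let every letter be inserted after
`v` in `v · z · u`, and writing `v · z · w` as `v · x · z · w` or `v · z · x · z · w` (the dichotomy
once more) exposes the factor `x · z · w · u`, from which `w` can be removed.
-/

theorem mul_mul_mul_mul_eq_of_mul_mul_mul_mul_eq {S : Type*} [Semigroup S]
    (hI : ∀ x y z u w : S, x * y * z = x * y * w * z ∨ x * y * z = x * u * y * z)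
    {x z u w : S} (v : S)
    (h : x * z * w * u = x * z * u) : v * z * w * u = v * z * u := by
  by_contra hne
  have hinsert : ∀ t, v * t * z * u = v * z * u := fun t =>
    ((hI v z u t w).resolve_left fun h' => hne h'.symm).symm
  rcases hI v z w x (x * z) with hzxz | hxz
  · refine hne ?_
    calc v * z * w * u = v * z * (x * z) * w * u := by rw [← hzxz]
      _ = v * z * (x * z * w * u) := by simp only [mul_assoc]
      _ = v * (z * x) * z * u := by rw [h]; simp only [mul_assoc]
      _ = v * z * u := hinsert (z * x)
  · refine hne ?_
    calc v * z * w * u = v * x * z * w * u := by rw [← hxz]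
      _ = v * (x * z * w * u) := by simp only [mul_assoc]
      _ = v * x * z * u := by rw [h]; simp only [mul_assoc]
      _ = v * z * u := hinsert x

theorem stmt_6_general {S : Type*} [Semigroup S]
    (hI : ∀ x y z u w : S, x * y * z = x * y * w * z ∨ x * y * z = x * u * y * z) :
    ∀ x y z u v w : S, x * y * z * u = x * z * u ∨ v * z * w * u = v * z * u := by
  intro x y z u v w
  rcases hI x z u y w with hw | hy
  · exact Or.inr (mul_mul_mul_mul_eq_of_mul_mul_mul_mul_eq hI v hw.symm)
  · exact Or.inl hy.symm

theorem stmt_6 {S : Type*} [Semigroup S]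
    (hGRB : ∀ x y z : S, x * y * z * x * y = x * y)
    (hI : ∀ x y z u w : S, x * y * z = x * y * w * z ∨ x * y * z = x * u * y * z) :
    ∀ x y z u v w : S, x * y * z * u = x * z * u ∨ v * z * w * u = v * z * u :=
  stmt_6_general hI
end

section
/- Let S be a semigroup satisfying the identity x·y·z·x·y = x·y for all x, y, z ∈ S, and suppose that for all x, y, z, u, w ∈ S, x·y·z = x·y·w·z or x·y·z = x·u·y·z. Then for all x, z, v, w ∈ S, z·x = z·z·x or v·z·w·x = v·z·x. -/
/-! Both alternatives of the inclusion identity, applied to `(a·b)·b·t` and closed up with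
`a·b·b·a·b = a·b`, give `a·b·b·t = a·b·t`. For the theorem, apply the inclusion identity to
`z·z·x`: either `z·z·x = z·z·w·x`, and then `v·z·w·x = v·z·z·w·x = v·z·z·x = v·z·x`; or
`z·z·x = z·(x·z)·z·x`, which is `z·x` by the GRB identity. -/

theorem mul_mul_self_mul {S : Type*} [Semigroup S]
    (hGRB : ∀ x y z : S, x * y * z * x * y = x * y)
    (hI : ∀ x y z u w : S, x * y * z = x * y * w * z ∨ x * y * z = x * u * y * z)
    (a b t : S) : a * b * b * t = a * b * t := by
  have hab : a * b * b * a * b = a * b := hGRB a b b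
  rcases hI (a * b) b t (b * a) (a * b) with h | h
  · rw [h, ← mul_assoc (a * b * b) a b, hab]
  · rw [h, ← mul_assoc (a * b) b a, hab]

theorem stmt_7 {S : Type*} [Semigroup S]
    (hGRB : ∀ x y z : S, x * y * z * x * y = x * y)
    (hI : ∀ x y z u w : S, x * y * z = x * y * w * z ∨ x * y * z = x * u * y * z) :
    ∀ x z v w : S, z * x = z * z * x ∨ v * z * w * x = v * z * x := by
  intro x z v w
  rcases hI z z x (x * z) w with h | h
  · right
    calc v * z * w * x = v * z * z * (w * x) := by
          rw [mul_mul_self_mul hGRB hI, mul_assoc]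
      _ = v * (z * z * w * x) := by simp only [mul_assoc]
      _ = v * z * x := by
          rw [← h, ← mul_assoc, ← mul_assoc, mul_mul_self_mul hGRB hI]
  · left
    calc z * x = z * x * z * z * x := (hGRB z x z).symm
      _ = z * z * x := by rw [h, ← mul_assoc z x z]
end

section
/- Let S be a semigroup satisfying the identity x·y·z·x·y = x·y for all x, y, z ∈ S, and suppose that for all x, y, z, u, w ∈ S, x·y·z = x·y·w·z or x·y·z = x·u·y·z. Then for all x, y, s, t, u ∈ S, s·u·y·t = s·y·t or x·y = x·y·y. -/
/-!
Taking `u = w = y` in the inclusion identity gives `x y z = x y y z`, and together with the GRB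
identity this makes every product `x y` idempotent. If `x y ≠ x y y`, the inclusion identity for
`x y y` can then only hold in its second form, so `x s y y = x y y` for every `s`. Now apply the
inclusion identity to `s y y` with `w = y x`: its first form `s y y = s y y x y` would give
`x y = x y y x y = x s y y x y = x s y y = x y y`, so the second form `s y y = s u y y` holds, and
doubling `y` on both sides yields `s u y t = s y t`.
-/

namespace GRBInclusion

variable {S : Type*} [Semigroup S]

theorem mul_mul_self_mul
    (hI : ∀ x y z u w : S, x * y * z = x * y * w * z ∨ x * y * z = x * u * y * z) (a b c : S) :
    a * b * b * c = a * b * c :=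
  ((hI a b c b b).elim id id).symm

theorem mul_mul_mul_mul_self (hGRB : ∀ x y z : S, x * y * z * x * y = x * y)
    (hN : ∀ a b c : S, a * b * b * c = a * b * c) (a b : S) :
    a * b * a * b = a * b :=
  calc a * b * a * b = a * b * b * a * b := by rw [hN a b a]
    _ = a * b := hGRB a b b

theorem mul_mul_mul_self_eq_of_ne
    (hI : ∀ x y z u w : S, x * y * z = x * y * w * z ∨ x * y * z = x * u * y * z)
    (hidem : ∀ a b : S, a * b * a * b = a * b) {x y : S} (hxy : x * y ≠ x * y * y) (s : S) :
    x * s * y * y = x * y * y := by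
  rcases hI x y y s x with h | h
  · exact absurd (h.trans (hidem x y)).symm hxy
  · exact h.symm

end GRBInclusion

open GRBInclusion in
theorem stmt_8 {S : Type*} [Semigroup S]
    (hGRB : ∀ x y z : S, x * y * z * x * y = x * y)
    (hI : ∀ x y z u w : S, x * y * z = x * y * w * z ∨ x * y * z = x * u * y * z) :
    ∀ x y s t u : S, s * u * y * t = s * y * t ∨ x * y = x * y * y := by
  have hN := mul_mul_self_mul hI
  have hidem := mul_mul_mul_mul_self hGRB hN
  intro x y s t u
  by_cases hxy : x * y = x * y * y
  · exact Or.inr hxy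
  have hK := mul_mul_mul_self_eq_of_ne hI hidem hxy s
  rcases hI s y y u (y * x) with h | h
  · have h' : s * y * y * x * y = s * y * y := by simpa only [← mul_assoc] using h.symm
    refine absurd ?_ hxy
    calc x * y = x * y * y * x * y := by rw [hN x y x, hidem]
      _ = x * s * y * y * x * y := by rw [hK]
      _ = x * (s * y * y * x * y) := by simp only [mul_assoc]
      _ = x * s * y * y := by rw [h']; simp only [mul_assoc]
      _ = x * y * y := hK
  · left
    calc s * u * y * t = s * u * y * y * t := (hN (s * u) y t).symm
      _ = s * y * y * t := by rw [← h]
      _ = s * y * t := hN s y t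
end

section
/- Let S be a semigroup satisfying the identity x·y·z·x·y = x·y for all x, y, z ∈ S, and suppose that for all x, y, z ∈ S, x·y·y = x·y or z·z·x = z·x. Then for all x, y, z, u, w ∈ S, x·y·y = x·y or z·x·u·w = z·z·u·w. -/
/-! If `z * z * x = z * x`, then `z * x * (u * w) * (z * z) = z * z * x * (u * w) * (z * z) = z * z`
by the GRB identity with `x = y = z`; and since `u * w` is sandwiched as `u * w * t * (u * w) = u * w`,
`z * x * (u * w) = z * x * (u * w) * (z * z) * (u * w) = z * z * (u * w)`. -/

section GRB

variable {S : Type*} [Semigroup S] (hGRB : ∀ x y z : S, x * y * z * x * y = x * y)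
include hGRB

theorem GRB.mul_mul_mul_self (x y t : S) : x * y * t * (x * y) = x * y := by
  rw [← mul_assoc]
  exact hGRB x y t

theorem GRB.mul_mul_sq_eq_sq {x z : S} (h : z * z * x = z * x) (v : S) :
    z * x * v * (z * z) = z * z := by
  rw [← h, mul_assoc (z * z) x v]
  exact GRB.mul_mul_mul_self hGRB z z (x * v)

theorem GRB.mul_mul_eq_sq_mul_of_sq_mul_eq {x z : S} (h : z * z * x = z * x) (u w : S) :
    z * x * (u * w) = z * z * (u * w) :=
  calc z * x * (u * w)
      = z * x * (u * w * (z * z) * (u * w)) := by rw [GRB.mul_mul_mul_self hGRB]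
    _ = z * x * (u * w) * (z * z) * (u * w) := by simp only [mul_assoc]
    _ = z * z * (u * w) := by rw [GRB.mul_mul_sq_eq_sq hGRB h]

end GRB

theorem stmt_10 {S : Type*} [Semigroup S]
    (hGRB : ∀ x y z : S, x * y * z * x * y = x * y)
    (h2 : ∀ x y z : S, x * y * y = x * y ∨ z * z * x = z * x) :
    ∀ x y z u w : S, x * y * y = x * y ∨ z * x * u * w = z * z * u * w := by
  intro x y z u w
  refine (h2 x y z).imp id fun h => ?_
  simpa only [mul_assoc] using GRB.mul_mul_eq_sq_mul_of_sq_mul_eq hGRB h u w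
end

section
/- Let S be a semigroup satisfying the identity x·y·z·x·y = x·y for all x, y, z ∈ S, and suppose that for all x, y, z ∈ S, x·y·y = x·y or z·z·x = z·x. If there exist a, b ∈ S with a·b·b ≠ a·b, then z·u·v·w = z·v·w for all z, u, v, w ∈ S. -/
namespace IsGRB

variable {S : Type*} [Semigroup S]

theorem mul_mul_mul_self (hS : IsGRB S) (x y t : S) : x * y * t * (x * y) = x * y := by
  rw [← mul_assoc]
  exact hS x y t

theorem mul_mul_mul_mul_cancel_middle (hS : IsGRB S) (x y t c d : S) :
    x * y * t * (c * d) = x * y * (c * d) :=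
  calc x * y * t * (c * d)
      = x * y * t * (c * d * (x * y) * (c * d)) := by rw [hS.mul_mul_mul_self c d (x * y)]
    _ = x * y * (t * (c * d)) * x * y * (c * d) := by simp only [mul_assoc]
    _ = x * y * (c * d) := by rw [hS x y]

theorem mul_mul_self_of_mul_mul_mul_self (hS : IsGRB S) {a b c : S}
    (h : c * a * b * b = c * a * b) : a * b * b = a * b :=
  calc a * b * b
      = a * b * c * a * b * b := by rw [hS a b c]
    _ = a * b * (c * a * b * b) := by simp only [mul_assoc]
    _ = a * b * c * a * b := by rw [h]; simp only [mul_assoc]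
    _ = a * b := hS a b c

theorem mul_self_mul_mul (hS : IsGRB S)
    (h2 : ∀ x y z : S, x * y * y = x * y ∨ z * z * x = z * x)
    {a b : S} (hab : a * b * b ≠ a * b) (z p q : S) :
    z * z * (p * q) = z * (p * q) := by
  have hsq : z * z * (p * q * a) = z * (p * q * a) :=
    (h2 (p * q * a) b z).resolve_left fun h ↦ hab (hS.mul_mul_self_of_mul_mul_mul_self h)
  calc z * z * (p * q)
      = z * z * (p * q * a) * (p * q) := by rw [mul_assoc _ (p * q * a), hS.mul_mul_mul_self]
    _ = z * (p * q * a) * (p * q) := by rw [hsq]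
    _ = z * (p * q) := by rw [mul_assoc, hS.mul_mul_mul_self]

theorem mul_mul_mul_self_of_mul_self_mul (hS : IsGRB S)
    (hsq : ∀ z p q : S, z * z * (p * q) = z * (p * q)) (p q : S) :
    p * q * (p * q) = p * q := by
  rw [← hsq (p * q) p q, hS.mul_mul_mul_self]

theorem mul_mul_mul_mul_of_mul_self_mul (hS : IsGRB S)
    (hsq : ∀ z p q : S, z * z * (p * q) = z * (p * q)) (z u v w : S) :
    z * u * v * w = z * v * w :=
  calc z * u * v * w
      = z * z * (u * (v * w)) := by rw [hsq]; simp only [mul_assoc]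
    _ = z * z * (u * (v * w)) * (v * w) := by
        rw [mul_assoc _ _ (v * w), mul_assoc u, hS.mul_mul_mul_self_of_mul_self_mul hsq]
    _ = z * v * w := by rw [hS.mul_mul_mul_mul_cancel_middle, hsq, mul_assoc]

end IsGRB

theorem stmt_12 {S : Type*} [Semigroup S]
    (hGRB : ∀ x y z : S, x * y * z * x * y = x * y)
    (h2 : ∀ x y z : S, x * y * y = x * y ∨ z * z * x = z * x)
    (h : ∃ a b : S, a * b * b ≠ a * b) :
    ∀ z u v w : S, z * u * v * w = z * v * w := by
  obtain ⟨a, b, hab⟩ := h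
  exact IsGRB.mul_mul_mul_mul_of_mul_self_mul hGRB (IsGRB.mul_self_mul_mul hGRB h2 hab)
end

section
/- Let S be a semigroup satisfying the identity x·y·z·x·y = x·y for all x, y, z ∈ S, and suppose that for all x, y, z ∈ S, x·y·y = x·y or z·z·x = z·x. If there exist a, b ∈ S with a·b·b ≠ a·b, then for that b and all z, u, w ∈ S, both z·b·u·w = z·u·w and z·u·b·w = z·b·w hold. -/
namespace IsGRB

variable {S : Type*} [Semigroup S]

theorem mul_mul_mul_mul_mul (h : IsGRB S) (x y s u v : S) :
    x * y * s * (u * v) = x * y * (u * v) :=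
  calc x * y * s * (u * v) = x * y * s * (u * v * (x * y) * u * v) := by rw [h]
    _ = x * y * (s * u * v) * x * y * (u * v) := by simp only [mul_assoc]
    _ = x * y * (u * v) := by rw [h]

theorem mul_mul_self_mul (h : IsGRB S) (z u x : S) : z * u * u * x = z * u * x :=
  calc z * u * u * x = z * u * (x * z) * (u * x) := by
        rw [h.mul_mul_mul_mul_mul, mul_assoc]
    _ = z * (u * x * z * u * x) := by simp only [mul_assoc]
    _ = z * u * x := by rw [h, mul_assoc]

theorem mul_mul_self_of_left_mul_s13 (h : IsGRB S) {a b w : S} (hw : w * a * b * b = w * a * b) :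
    a * b * b = a * b :=
  calc a * b * b = a * b * (w * a * b * b) := by
        conv_lhs => rw [← h a b w]
        simp only [mul_assoc]
    _ = a * b := by rw [hw]; simp only [← mul_assoc]; exact h a b w

theorem mul_mul_mul_eq_mul_self_mul_mul (h : IsGRB S) {c : S}
    (hc : ∀ z w : S, z * z * (w * c) = z * (w * c)) (z x u v : S) :
    z * x * (u * v) = z * z * (u * v) :=
  calc z * x * (u * v) = z * x * c * (u * v) := (h.mul_mul_mul_mul_mul z x c u v).symm
    _ = z * z * (x * c) * (u * v) := by rw [hc, mul_assoc z x c]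
    _ = z * z * x * (u * v) := by rw [← mul_assoc (z * z) x c, h.mul_mul_mul_mul_mul]
    _ = z * z * (u * v) := h.mul_mul_mul_mul_mul z z x u v

theorem mul_mul_mul_mul_eq_mul_mul_mul (h : IsGRB S) {c : S}
    (hc : ∀ z w : S, z * z * (w * c) = z * (w * c)) (z x u w : S) :
    z * x * u * w = z * u * w :=
  calc z * x * u * w = z * u * (u * w) := by
        rw [mul_assoc, h.mul_mul_mul_eq_mul_self_mul_mul hc,
          h.mul_mul_mul_eq_mul_self_mul_mul hc z u]
    _ = z * u * w := by rw [← mul_assoc, h.mul_mul_self_mul]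

end IsGRB

theorem stmt_13 {S : Type*} [Semigroup S]
    (hGRB : ∀ x y z : S, x * y * z * x * y = x * y)
    (h2 : ∀ x y z : S, x * y * y = x * y ∨ z * z * x = z * x)
    (a b : S) (hab : a * b * b ≠ a * b) :
    ∀ z u w : S, z * b * u * w = z * u * w ∧ z * u * b * w = z * b * w := by
  have hGRB : IsGRB S := hGRB
  have hc : ∀ z w : S, z * z * (w * a) = z * (w * a) := fun z w =>
    (h2 (w * a) b z).resolve_left fun hw => hab (hGRB.mul_mul_self_of_left_mul_s13 hw)
  intro z u w
  exact ⟨hGRB.mul_mul_mul_mul_eq_mul_mul_mul hc z b u w,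
    hGRB.mul_mul_mul_mul_eq_mul_mul_mul hc z u b w⟩
end

section
/- Let S be a semigroup satisfying the identity x·y·z·x·y = x·y for all x, y, z ∈ S, and suppose that for all x, y, z, u, w ∈ S, x·y·z = x·y·w·z or x·y·z = x·u·y·z. Then for all x, y ∈ S, x·y·y = x·y or y·y·x = y·x. -/
/-! Every product `a * b` is idempotent: the inclusion law with `u = w = b` gives
`a * b * (a * b) = a * b * b * a * b`, which the GRB identity collapses to `a * b`.
The inclusion law with `(x, y, z) := (y, x, y)` and `u = w = y` says `y * x * y` absorbs an extra `y`
on the right or on the left; multiplying by `x` on the left, resp. on the right, and using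
idempotence of `x * y`, resp. `y * x`, gives the two alternatives. -/

section

variable {S : Type*} [Semigroup S]

theorem isIdempotentElem_mul_of_grb
    (hGRB : ∀ x y z : S, x * y * z * x * y = x * y)
    (hI : ∀ x y z u w : S, x * y * z = x * y * w * z ∨ x * y * z = x * u * y * z) (a b : S) :
    IsIdempotentElem (a * b) := by
  have hb : a * b * (a * b) = a * b * b * (a * b) := by
    simpa only [or_self] using hI a b (a * b) b b
  rw [IsIdempotentElem, hb, ← mul_assoc, hGRB]

theorem mul_mul_self_eq_of_isIdempotentElem {x y : S} (hxy : IsIdempotentElem (x * y))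
    (h : y * x * y = y * x * y * y) : x * y * y = x * y :=
  calc x * y * y = x * y * (x * y) * y := by rw [hxy.eq]
    _ = x * (y * x * y * y) := by simp only [mul_assoc]
    _ = x * y * (x * y) := by rw [← h]; simp only [mul_assoc]
    _ = x * y := hxy.eq

theorem mul_self_mul_eq_of_isIdempotentElem {x y : S} (hyx : IsIdempotentElem (y * x))
    (h : y * x * y = y * y * x * y) : y * y * x = y * x :=
  calc y * y * x = y * (y * x * (y * x)) := by rw [hyx.eq, mul_assoc]
    _ = y * y * x * y * x := by simp only [mul_assoc]
    _ = y * x * (y * x) := by rw [← h]; simp only [mul_assoc]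
    _ = y * x := hyx.eq

end

theorem stmt_14 {S : Type*} [Semigroup S]
    (hGRB : ∀ x y z : S, x * y * z * x * y = x * y)
    (hI : ∀ x y z u w : S, x * y * z = x * y * w * z ∨ x * y * z = x * u * y * z) :
    ∀ x y : S, x * y * y = x * y ∨ y * y * x = y * x := by
  intro x y
  have hidem := isIdempotentElem_mul_of_grb hGRB hI
  rcases hI y x y y y with h | h
  · exact .inl (mul_mul_self_eq_of_isIdempotentElem (hidem x y) h)
  · exact .inr (mul_self_mul_eq_of_isIdempotentElem (hidem y x) h)
end

section
/- There exists a semigroup S with exactly 11 elements such that: (i) S satisfies the identity x·y·z·x·y = x·y for all x, y, z ∈ S; (ii) for all x, y ∈ S, x·y·y = x·y or y·y·x = y·x; and (iii) there exist x, y, z, u, w ∈ S with x·y·z ≠ x·y·w·z and x·y·z ≠ x·u·y·z. In other words, there is an 11-element semigroup in the class A that is not in the class I. -/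
/-!
Let `g = ![0, 0, 1] : Fin 3 → Fin 3`, so that `g ∘ g` is constant, and take in
`End (Fin 3) × End (Fin 3)ᵐᵒᵖ` the nine pairs of constant maps together with `(0, g)` and `(g, 0)`.
Every coordinate of these elements is constant or `g`, so every product of two of them is a pair of
constants `c`; such a `c` satisfies `c * s * c = c` for every `s`, which gives `xyzxy = xy`.
The element `x = (g, 0)` reads the left coordinate of what follows it through `g`, and `z = (0, g)`
the right coordinate of what precedes it, so inserting a constant pair between `x` and `y`, or
between `y` and `z`, can change `xyz`.
-/

open Function MulOpposite

instance : DecidableEq (Function.End (Fin 3)) := inferInstanceAs (DecidableEq (Fin 3 → Fin 3))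

abbrev EndPair : Type := Function.End (Fin 3) × (Function.End (Fin 3))ᵐᵒᵖ

def squash : Function.End (Fin 3) := ![0, 0, 1]

theorem squash_mul_squash : squash * squash = const _ 0 := by
  funext i; fin_cases i <;> rfl

def constOrSquash : Set (Function.End (Fin 3)) := insert squash (Set.range (const _))

theorem mul_mem_range_const {f g : Function.End (Fin 3)} (hf : f ∈ constOrSquash)
    (hg : g ∈ constOrSquash) : f * g ∈ Set.range (const _) := by
  rcases hf with rfl | ⟨p, rfl⟩
  · rcases hg with rfl | ⟨q, rfl⟩
    · exact ⟨0, squash_mul_squash.symm⟩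
    · exact ⟨squash q, rfl⟩
  · exact ⟨p, rfl⟩

def constPair (p q : Fin 3) : EndPair := (const _ p, op (const _ q))

theorem constPair_mul_mul_constPair (p q : Fin 3) (s : EndPair) :
    constPair p q * s * constPair p q = constPair p q := rfl

def semigroupElem : Fin 3 × Fin 3 ⊕ Fin 2 → EndPair
  | .inl (p, q) => constPair p q
  | .inr i => ![(const _ 0, op squash), (squash, op (const _ 0))] i

theorem semigroupElem_injective : Injective semigroupElem := by decide

theorem semigroupElem_mem_constOrSquash (i : Fin 3 × Fin 3 ⊕ Fin 2) :
    (semigroupElem i).1 ∈ constOrSquash ∧ (semigroupElem i).2.unop ∈ constOrSquash := by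
  rcases i with ⟨p, q⟩ | i
  · exact ⟨Or.inr ⟨p, rfl⟩, Or.inr ⟨q, rfl⟩⟩
  · fin_cases i
    · exact ⟨Or.inr ⟨0, rfl⟩, Or.inl rfl⟩
    · exact ⟨Or.inl rfl, Or.inr ⟨0, rfl⟩⟩

theorem semigroupElem_mul_semigroupElem (i j : Fin 3 × Fin 3 ⊕ Fin 2) :
    ∃ p q, semigroupElem i * semigroupElem j = constPair p q := by
  obtain ⟨⟨p, hp⟩, ⟨q, hq⟩⟩ : (semigroupElem i * semigroupElem j).1 ∈ Set.range (const _) ∧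
      (semigroupElem i * semigroupElem j).2.unop ∈ Set.range (const _) :=
    ⟨mul_mem_range_const (semigroupElem_mem_constOrSquash i).1
        (semigroupElem_mem_constOrSquash j).1,
      mul_mem_range_const (semigroupElem_mem_constOrSquash j).2
        (semigroupElem_mem_constOrSquash i).2⟩
  exact ⟨p, q, Prod.ext hp.symm (unop_injective hq.symm)⟩

def semigroupANotI : Subsemigroup EndPair where
  carrier := Set.range semigroupElem
  mul_mem' := by
    rintro _ _ ⟨i, rfl⟩ ⟨j, rfl⟩
    obtain ⟨p, q, h⟩ := semigroupElem_mul_semigroupElem i j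
    exact ⟨.inl (p, q), h.symm⟩

theorem stmt_15 :
    ∃ (S : Type) (_ : Semigroup S) (_ : Fintype S),
      Fintype.card S = 11 ∧
      (∀ x y z : S, x * y * z * x * y = x * y) ∧
      (∀ x y : S, x * y * y = x * y ∨ y * y * x = y * x) ∧
      (∃ x y z u w : S, x * y * z ≠ x * y * w * z ∧ x * y * z ≠ x * u * y * z) := by
  refine ⟨semigroupANotI, inferInstance, Set.fintypeRange semigroupElem,
    Set.card_range_of_injective semigroupElem_injective, ?_, ?_, ?_⟩
  · rintro ⟨_, i, rfl⟩ ⟨_, j, rfl⟩ z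
    obtain ⟨p, q, h⟩ := semigroupElem_mul_semigroupElem i j
    apply Subtype.ext
    change semigroupElem i * semigroupElem j * z * (semigroupElem i * semigroupElem j) =
      semigroupElem i * semigroupElem j
    rw [h, constPair_mul_mul_constPair]
  · rintro ⟨_, i, rfl⟩ ⟨_, j, rfl⟩
    simp only [← Subtype.coe_inj]
    revert i j
    decide
  · refine ⟨⟨_, .inr 1, rfl⟩, ⟨_, .inl (0, 0), rfl⟩, ⟨_, .inr 0, rfl⟩,
      ⟨_, .inl (2, 0), rfl⟩, ⟨_, .inl (0, 2), rfl⟩, ?_, ?_⟩ <;>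
    simp only [ne_eq, ← Subtype.coe_inj] <;> decide
end

section
/- There exists a semigroup S with exactly 10 elements such that: (i) S satisfies the identity x·y·z·x·y = x·y for all x, y, z ∈ S; and (ii) there exist x, y ∈ S with x·y·y ≠ x·y and y·y·x ≠ y·x. In other words, there is a 10-element semigroup in GRB that is not in the class A. -/
/-!
Adjoin to a rectangular band `I × J` an element `b` acting on the left by `f : I → I` and on the
right by `g : J → J`, with `b * b = (i₀, j₀)`. This is a semigroup as soon as `f ∘ f` and `g ∘ g`
are the constants `i₀` and `j₀`. The band is an ideal, so `x * y = p` lies in it, and then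
`p * z * p = p` gives the identity `x y z x y = x y`. On the other hand `p * b * b ≠ p * b` and
`b * b * p ≠ b * p` as soon as `f` and `g` are not constant, which needs `|I|, |J| ≥ 3`; with
`I = J = Fin 3` the semigroup has `3 * 3 + 1 = 10` elements.
-/

theorem Function.apply_eq_of_forall_apply_apply_eq {α : Type*} {f : α → α} {a : α}
    (hf : ∀ x, f (f x) = a) : f a = a :=
  calc f a = f (f (f a)) := by rw [hf a]
    _ = a := hf _

namespace RectBandAdjoin

variable {I J : Type*} (f : I → I) (g : J → J) (i₀ : I) (j₀ : J)

/-- `none` is the adjoined element `b`. -/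
def mul : Option (I × J) → Option (I × J) → Option (I × J)
  | none, none => some (i₀, j₀)
  | none, some (i, j) => some (f i, j)
  | some (i, j), none => some (i, g j)
  | some (i, _), some (_, j) => some (i, j)

local infixl:70 " ⋆ " => mul f g i₀ j₀

variable {f g i₀ j₀}

theorem exists_mul_eq_some (x y : Option (I × J)) : ∃ p, x ⋆ y = some p := by
  rcases x with _ | ⟨i, j⟩ <;> rcases y with _ | ⟨i', j'⟩ <;> exact ⟨_, rfl⟩

theorem some_mul_mul_some (p q : I × J) (z : Option (I × J)) :
    some p ⋆ z ⋆ some q = some (p.1, q.2) := by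
  rcases z with _ | ⟨i, j⟩ <;> rfl

theorem mul_assoc (hf : ∀ i, f (f i) = i₀) (hg : ∀ j, g (g j) = j₀) (x y z : Option (I × J)) :
    x ⋆ y ⋆ z = x ⋆ (y ⋆ z) := by
  have hf₀ := Function.apply_eq_of_forall_apply_apply_eq hf
  have hg₀ := Function.apply_eq_of_forall_apply_apply_eq hg
  rcases x with _ | ⟨i, j⟩ <;> rcases y with _ | ⟨i', j'⟩ <;> rcases z with _ | ⟨i'', j''⟩ <;>
    simp [mul, hf, hg, hf₀, hg₀]

variable (f g i₀ j₀) in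
abbrev semigroup (hf : ∀ i, f (f i) = i₀) (hg : ∀ j, g (g j) = j₀) :
    Semigroup (Option (I × J)) where
  mul := mul f g i₀ j₀
  mul_assoc := mul_assoc hf hg

theorem mul_mul_mul_mul_mul_eq (hf : ∀ i, f (f i) = i₀) (hg : ∀ j, g (g j) = j₀)
    (x y z : Option (I × J)) : x ⋆ y ⋆ z ⋆ x ⋆ y = x ⋆ y := by
  obtain ⟨p, hp⟩ := exists_mul_eq_some (f := f) (g := g) (i₀ := i₀) (j₀ := j₀) x y
  rw [mul_assoc hf hg _ x y, hp, some_mul_mul_some]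

theorem some_mul_none_mul_none_ne {i : I} {j : J} (hj : g (g j) ≠ g j) :
    some (i, j) ⋆ none ⋆ none ≠ some (i, j) ⋆ none := by
  simpa [mul] using hj

theorem none_mul_none_mul_some_ne {i : I} {j : J} (hi : f i ≠ i₀) :
    none ⋆ none ⋆ some (i, j) ≠ none ⋆ some (i, j) := by
  simpa [mul] using hi.symm

end RectBandAdjoin

def Fin.threeSatSucc (i : Fin 3) : Fin 3 := if i = 0 then 1 else 2

open RectBandAdjoin in
theorem stmt_16 :
    ∃ (S : Type) (_ : Semigroup S) (_ : Fintype S),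
      Fintype.card S = 10 ∧
      (∀ x y z : S, x * y * z * x * y = x * y) ∧
      (∃ x y : S, x * y * y ≠ x * y ∧ y * y * x ≠ y * x) := by
  have hf : ∀ i, Fin.threeSatSucc (Fin.threeSatSucc i) = 2 := by decide
  refine ⟨Option (Fin 3 × Fin 3), semigroup _ _ _ _ hf hf, inferInstance, rfl,
    mul_mul_mul_mul_mul_eq hf hf, some (0, 0), none, ?_, ?_⟩
  · exact some_mul_none_mul_none_ne (by decide)
  · exact none_mul_none_mul_some_ne (by decide)
end
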